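/- arXiv:2311.00851 — 4 statements merged into one kernel-verified Lean document; each statement's English description precedes it below -/
import Mathlib

section
/- Let Λ ⊂ ℝ^M be a cone and K ⊂ ℝ^M a set such that p − q ∈ Λ for all p, q ∈ K (i.e. Λ is complete with respect to K). Then the Λ-convex hull of K equals the convex hull of K. -/
/-- A set `S` is `Λ`-convex if it contains the segment between any two of its
points whose difference lies in `Λ`. -/
def LambdaConvex {M : ℕ} (Λ S : Set (EuclideanSpace ℝ (Fin M))) : Prop :=
  ∀ p ∈ S, ∀ q ∈ S, p - q ∈ Λ → segment ℝ p q ⊆ S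

/-- The `Λ`-convex hull of `K`: the smallest `Λ`-convex set containing `K`. -/
def lambdaHull {M : ℕ} (Λ K : Set (EuclideanSpace ℝ (Fin M))) :
    Set (EuclideanSpace ℝ (Fin M)) :=
  ⋂₀ {S | LambdaConvex Λ S ∧ K ⊆ S}

private lemma lambda_aux {M : ℕ} (Λ K S : Set (EuclideanSpace ℝ (Fin M)))
    (hcone : ∀ (t : ℝ), 0 < t → ∀ v ∈ Λ, t • v ∈ Λ)
    (hcomplete : ∀ p ∈ K, ∀ q ∈ K, p - q ∈ Λ)
    (hS : LambdaConvex Λ S) (hKS : K ⊆ S) :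
    ∀ (n : ℕ) (t : Finset (EuclideanSpace ℝ (Fin M))), t.card ≤ n → ↑t ⊆ K →
      ∀ w : EuclideanSpace ℝ (Fin M) → ℝ, (∀ y ∈ t, 0 ≤ w y) →
        ∑ y ∈ t, w y = 1 → ∑ y ∈ t, w y • y ∈ S := by
  classical
  intro n
  induction n with
  | zero =>
    intro t hcard _ w _ hsum
    rw [Nat.le_zero, Finset.card_eq_zero] at hcard
    subst hcard
    simp at hsum
  | succ n ih =>
    intro t hcard htK w hw0 hsum
    by_cases hz : ∃ a ∈ t, w a = 0
    · obtain ⟨a, ha, hwa⟩ := hz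
      have h1 : ∑ y ∈ t, w y • y = ∑ y ∈ t.erase a, w y • y := by
        rw [← Finset.add_sum_erase t _ ha, hwa, zero_smul, zero_add]
      have h2 : ∑ y ∈ t.erase a, w y = 1 := by
        rw [← Finset.add_sum_erase t _ ha, hwa, zero_add] at hsum
        exact hsum
      rw [h1]
      refine ih (t.erase a) ?_
        (fun y hy => htK (Finset.mem_coe.mpr (Finset.mem_of_mem_erase (Finset.mem_coe.mp hy))))
        w (fun y hy => hw0 y (Finset.mem_of_mem_erase hy)) h2
      have := Finset.card_erase_of_mem ha
      omega
    · push_neg at hz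
      have hpos : ∀ a ∈ t, 0 < w a := fun a ha => (hw0 a ha).lt_of_ne' (hz a ha)
      rcases Nat.lt_or_ge t.card 2 with hlt | hge
      · -- card 0 or 1
        interval_cases h : t.card
        · rw [Finset.card_eq_zero] at h; subst h; simp at hsum
        · rw [Finset.card_eq_one] at h
          obtain ⟨a, rfl⟩ := h
          simp only [Finset.sum_singleton] at hsum ⊢
          rw [hsum, one_smul]
          exact hKS (htK (by simp))
      · obtain ⟨a, ha, b, hb, hne⟩ := Finset.one_lt_card.mp hge
        -- split x along direction a - b
        set s : Finset (EuclideanSpace ℝ (Fin M)) := (t.erase a).erase b with hs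
        have hbs : b ∈ t.erase a := Finset.mem_erase.mpr ⟨hne.symm, hb⟩
        have has : a ∈ t.erase b := Finset.mem_erase.mpr ⟨hne, ha⟩
        have herase : (t.erase b).erase a = s := Finset.erase_right_comm
        have hys : ∀ y ∈ s, y ≠ a ∧ y ≠ b := by
          intro y hy
          rw [hs] at hy
          exact ⟨(Finset.mem_erase.mp (Finset.mem_of_mem_erase hy)).1,
            (Finset.mem_erase.mp hy).1⟩
        set R : EuclideanSpace ℝ (Fin M) := ∑ y ∈ s, w y • y with hR
        set W : ℝ := ∑ y ∈ s, w y with hW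
        have hxsplit : ∑ y ∈ t, w y • y = w a • a + (w b • b + R) := by
          rw [← Finset.add_sum_erase t _ ha, ← Finset.add_sum_erase (t.erase a) _ hbs]
        have hwsplit : w a + (w b + W) = 1 := by
          show w a + (w b + ∑ y ∈ (t.erase a).erase b, w y) = 1
          rw [Finset.add_sum_erase (t.erase a) _ hbs, Finset.add_sum_erase t _ ha]
          exact hsum
        set wp : EuclideanSpace ℝ (Fin M) → ℝ := fun y => if y = a then w a + w b else w y
        set wm : EuclideanSpace ℝ (Fin M) → ℝ := fun y => if y = b then w a + w b else w y
        have hxp : ∑ y ∈ t.erase b, wp y • y = (w a + w b) • a + R := by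
          rw [← Finset.add_sum_erase (t.erase b) _ has, herase]
          simp only [wp, if_pos rfl]
          congr 1
          refine Finset.sum_congr rfl fun y hy => ?_
          rw [if_neg (hys y hy).1]
        have hxm : ∑ y ∈ t.erase a, wm y • y = (w a + w b) • b + R := by
          rw [← Finset.add_sum_erase (t.erase a) _ hbs]
          simp only [wm, if_pos rfl]
          congr 1
          refine Finset.sum_congr rfl fun y hy => ?_
          rw [if_neg (hys y hy).2]
        have hsp : ∑ y ∈ t.erase b, wp y = 1 := by
          rw [← Finset.add_sum_erase (t.erase b) _ has, herase]
          simp only [wp, if_pos rfl]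
          rw [Finset.sum_congr rfl fun y hy => if_neg (hys y hy).1]
          rw [← hW]; linarith
        have hsm : ∑ y ∈ t.erase a, wm y = 1 := by
          rw [← Finset.add_sum_erase (t.erase a) _ hbs]
          simp only [wm, if_pos rfl]
          rw [Finset.sum_congr rfl fun y hy => if_neg (hys y hy).2]
          rw [← hW]; linarith
        have hcarda : (t.erase a).card ≤ n := by
          have := Finset.card_erase_of_mem ha; omega
        have hcardb : (t.erase b).card ≤ n := by
          have := Finset.card_erase_of_mem hb; omega
        have hsubK : ∀ c ∈ t, ↑(t.erase c) ⊆ K := fun c _ y hy =>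
          htK (Finset.mem_coe.mpr (Finset.mem_of_mem_erase (Finset.mem_coe.mp hy)))
        have hp : ∑ y ∈ t.erase b, wp y • y ∈ S := by
          refine ih (t.erase b) hcardb (hsubK b hb) wp ?_ hsp
          intro y hy
          by_cases h : y = a
          · simp only [wp, if_pos h]
            exact add_nonneg (hw0 a ha) (hw0 b hb)
          · simp only [wp, if_neg h]
            exact hw0 y (Finset.mem_of_mem_erase hy)
        have hm : ∑ y ∈ t.erase a, wm y • y ∈ S := by
          refine ih (t.erase a) hcarda (hsubK a ha) wm ?_ hsm
          intro y hy
          by_cases h : y = b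
          · simp only [wm, if_pos h]
            exact add_nonneg (hw0 a ha) (hw0 b hb)
          · simp only [wm, if_neg h]
            exact hw0 y (Finset.mem_of_mem_erase hy)
        have hdiff : (∑ y ∈ t.erase b, wp y • y) - (∑ y ∈ t.erase a, wm y • y) ∈ Λ := by
          rw [hxp, hxm]
          have : (w a + w b) • a + R - ((w a + w b) • b + R) = (w a + w b) • (a - b) := by
            module
          rw [this]
          exact hcone _ (by have := hpos a ha; have := hpos b hb; linarith)
            _ (hcomplete a (htK ha) b (htK hb))
        have hwab : 0 < w a + w b := by
          have := hpos a ha; have := hpos b hb; linarith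
        have hseg : ∑ y ∈ t, w y • y ∈
            segment ℝ (∑ y ∈ t.erase b, wp y • y) (∑ y ∈ t.erase a, wm y • y) := by
          rw [hxp, hxm]
          refine ⟨w a / (w a + w b), w b / (w a + w b), ?_, ?_, ?_, ?_⟩
          · exact div_nonneg (hw0 a ha) hwab.le
          · exact div_nonneg (hw0 b hb) hwab.le
          · field_simp
          · rw [hxsplit]
            have h1 : w a / (w a + w b) + w b / (w a + w b) = 1 := by field_simp
            have h2 : (w a / (w a + w b)) * (w a + w b) = w a := by field_simp
            have h3 : (w b / (w a + w b)) * (w a + w b) = w b := by field_simp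
            calc (w a / (w a + w b)) • ((w a + w b) • a + R)
                  + (w b / (w a + w b)) • ((w a + w b) • b + R)
                = ((w a / (w a + w b)) * (w a + w b)) • a
                  + ((w b / (w a + w b)) * (w a + w b)) • b
                  + (w a / (w a + w b) + w b / (w a + w b)) • R := by module
              _ = w a • a + (w b • b + R) := by rw [h1, h2, h3, one_smul]; module
        exact hS _ hp _ hm hdiff hseg

theorem lambdaHull_eq_convexHull_of_complete
    {M : ℕ} (Λ K : Set (EuclideanSpace ℝ (Fin M)))
    (hcone : ∀ (t : ℝ), 0 < t → ∀ v ∈ Λ, t • v ∈ Λ)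
    (hcomplete : ∀ p ∈ K, ∀ q ∈ K, p - q ∈ Λ) :
    lambdaHull Λ K = convexHull ℝ K := by
  apply Set.Subset.antisymm
  · -- convexHull K is Λ-convex and contains K
    apply Set.sInter_subset_of_mem
    refine ⟨fun p hp q hq _ => (convex_convexHull ℝ K).segment_subset hp hq,
      subset_convexHull ℝ K⟩
  · -- convexHull K ⊆ every Λ-convex S ⊇ K
    intro x hx
    intro S hSmem
    obtain ⟨hS, hKS⟩ := hSmem
    rw [convexHull_eq_union_convexHull_finite_subsets] at hx
    simp only [Set.mem_iUnion] at hx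
    obtain ⟨t, htK, hxt⟩ := hx
    rw [Finset.mem_convexHull'] at hxt
    obtain ⟨w, hw0, hsum, hxeq⟩ := hxt
    rw [← hxeq]
    exact lambda_aux Λ K S hcone hcomplete hS hKS t.card t le_rfl htK w hw0 hsum
end

section
/- Let ρ > 0 be fixed, p(ρ) ∈ ℝ, P(ρ) ∈ ℝ, Q ∈ ℝ. Define the wave cone Λ ⊂ ℝ² × Sym₀(2) × ℝ × ℝ² as the set of tuples (m, U, q, F) such that there exists η = (η_t, η_x) ∈ ℝ × ℝ² with η_x ≠ 0 and the 4×3 matrix with rows (0, mᵀ), (m, U + qI), (q, Fᵀ) annihilates η. Then for any two elements (m₁,U₁,q₁,F₁), (m₂,U₂,q₂,F₂) of the constitutive set K_{ρ,Q} = {(m,U,q,F) : U + qI = (m⊗m)/ρ + p(ρ)I, F = ((q+P(ρ))/ρ)·m, q ≤ Q}, the difference (m₁−m₂, U₁−U₂, q₁−q₂, F₁−F₂) lies in Λ. (Choose η_x ⊥ (m₁−m₂), η_x ≠ 0, and η_t = −(m₂·η_x)/ρ.) -/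
/-- The wave cone Λ is complete with respect to the constitutive set `K_{ρ,Q}`
of the barotropic compressible Euler system with energy inequality:
the difference of any two elements of `K_{ρ,Q}` lies in Λ.
A state is the tuple `(m₁, m₂, U₁₁, U₁₂, q, F₁, F₂)` where `U` is the
symmetric trace-free matrix with entries `U₁₁, U₁₂` (and `U₂₂ = −U₁₁`). -/
theorem euler_wave_cone_complete
    (ρ pρ Pρ Q : ℝ) (hρ : 0 < ρ)
    (m₁ m₂ U₁₁ U₁₂ q F₁ F₂ : ℝ)
    (m₁' m₂' U₁₁' U₁₂' q' F₁' F₂' : ℝ)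
    -- first point lies in K_{ρ,Q}
    (h1a : U₁₁ + q = m₁ ^ 2 / ρ + pρ)
    (h1b : -U₁₁ + q = m₂ ^ 2 / ρ + pρ)
    (h1c : U₁₂ = m₁ * m₂ / ρ)
    (h1d : F₁ = (q + Pρ) / ρ * m₁)
    (h1e : F₂ = (q + Pρ) / ρ * m₂)
    (h1f : q ≤ Q)
    -- second point lies in K_{ρ,Q}
    (h2a : U₁₁' + q' = m₁' ^ 2 / ρ + pρ)
    (h2b : -U₁₁' + q' = m₂' ^ 2 / ρ + pρ)
    (h2c : U₁₂' = m₁' * m₂' / ρ)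
    (h2d : F₁' = (q' + Pρ) / ρ * m₁')
    (h2e : F₂' = (q' + Pρ) / ρ * m₂')
    (h2f : q' ≤ Q) :
    -- the difference lies in the wave cone Λ
    ∃ ηt ηx₁ ηx₂ : ℝ, (ηx₁, ηx₂) ≠ (0, 0) ∧
      (m₁ - m₁') * ηx₁ + (m₂ - m₂') * ηx₂ = 0 ∧
      ηt * (m₁ - m₁') + ((U₁₁ - U₁₁') + (q - q')) * ηx₁ + (U₁₂ - U₁₂') * ηx₂ = 0 ∧
      ηt * (m₂ - m₂') + (U₁₂ - U₁₂') * ηx₁ + (-(U₁₁ - U₁₁') + (q - q')) * ηx₂ = 0 ∧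
      ηt * (q - q') + (F₁ - F₁') * ηx₁ + (F₂ - F₂') * ηx₂ = 0 := by
  have hρ' : ρ ≠ 0 := ne_of_gt hρ
  have hU : U₁₁ = m₁ ^ 2 / ρ + pρ - q := by linarith
  have hU' : U₁₁' = m₁' ^ 2 / ρ + pρ - q' := by linarith
  by_cases h : m₁ = m₁' ∧ m₂ = m₂'
  · obtain ⟨hm1, hm2⟩ := h
    have hq : q = q' := by
      have e1 : q * (2 * ρ) = q' * (2 * ρ) := by
        field_simp at h1a h1b h2a h2b
        subst hm1 hm2; linarith
      exact mul_right_cancel₀ (by positivity) e1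
    refine ⟨0, 1, 0, by simp, ?_, ?_, ?_, ?_⟩ <;>
      subst hm1 hm2 hq <;>
      simp [hU, hU', h1c, h2c, h1d, h2d, h1e, h2e]
  · refine ⟨(m₁' * (m₂ - m₂') - m₂' * (m₁ - m₁')) / ρ,
      -(m₂ - m₂'), m₁ - m₁', ?_, by ring, ?_, ?_, ?_⟩
    · intro hc
      apply h
      have h1 := congrArg Prod.fst hc
      have h2 := congrArg Prod.snd hc
      simp at h1 h2
      constructor <;> linarith
    · rw [hU, hU', h1c, h2c]; field_simp; ring
    · have hV : U₁₁ = q - m₂ ^ 2 / ρ - pρ := by linarith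
      have hV' : U₁₁' = q' - m₂' ^ 2 / ρ - pρ := by linarith
      rw [hV, hV', h1c, h2c]; field_simp; ring
    · rw [h1d, h2d, h1e, h2e]; field_simp; ring
end

section
/- Let ρ > 0, Q > p(ρ). The constitutive set K_{ρ,Q} = {(m,U,q,F) ∈ ℝ² × Sym₀(2) × ℝ × ℝ² : (m⊗m)/ρ + p(ρ)I = U + qI, F = ((q+P(ρ))/ρ)m, q ≤ Q} is compact in ℝ⁷. -/
/-- The constitutive set `K_{ρ,Q}` of the compressible Euler system with energy
inequality, as a set of tuples `(m₁, m₂, U₁₁, U₁₂, q, F₁, F₂)` (identifying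
`ℝ² × Sym₀(2) × ℝ × ℝ²` with `ℝ⁷`). -/
def eulerK (ρ pρ Pρ Q : ℝ) : Set (ℝ × ℝ × ℝ × ℝ × ℝ × ℝ × ℝ) :=
  {z | z.2.2.1 + z.2.2.2.2.1 = z.1 ^ 2 / ρ + pρ ∧
       -z.2.2.1 + z.2.2.2.2.1 = z.2.1 ^ 2 / ρ + pρ ∧
       z.2.2.2.1 = z.1 * z.2.1 / ρ ∧
       z.2.2.2.2.2.1 = (z.2.2.2.2.1 + Pρ) / ρ * z.1 ∧
       z.2.2.2.2.2.2 = (z.2.2.2.2.1 + Pρ) / ρ * z.2.1 ∧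
       z.2.2.2.2.1 ≤ Q}

theorem eulerK_isCompact (ρ pρ Pρ Q : ℝ) (hρ : 0 < ρ) (hQ : pρ < Q) :
    IsCompact (eulerK ρ pρ Pρ Q) := by
  set c : ℝ := 2 * ρ * (Q - pρ) with hc
  set D : Set (ℝ × ℝ) := {p | p.1 ^ 2 + p.2 ^ 2 ≤ c} with hD
  set Φ : ℝ × ℝ → ℝ × ℝ × ℝ × ℝ × ℝ × ℝ × ℝ := fun p =>
    (p.1, p.2, (p.1 ^ 2 - p.2 ^ 2) / (2 * ρ), p.1 * p.2 / ρ,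
      (p.1 ^ 2 + p.2 ^ 2) / (2 * ρ) + pρ,
      ((p.1 ^ 2 + p.2 ^ 2) / (2 * ρ) + pρ + Pρ) / ρ * p.1,
      ((p.1 ^ 2 + p.2 ^ 2) / (2 * ρ) + pρ + Pρ) / ρ * p.2) with hΦ
  have hρ' : (ρ : ℝ) ≠ 0 := ne_of_gt hρ
  have hDsub : D ⊆ Metric.closedBall (0 : ℝ × ℝ) (Real.sqrt c) := by
    intro p hp
    have hp' : p.1 ^ 2 + p.2 ^ 2 ≤ c := hp
    have h1 : p.1 ^ 2 ≤ c := by nlinarith [sq_nonneg p.2, hp']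
    have h2 : p.2 ^ 2 ≤ c := by nlinarith [sq_nonneg p.1, hp']
    have e1 : |p.1| ≤ Real.sqrt c := by
      rw [← Real.sqrt_sq_eq_abs]; exact Real.sqrt_le_sqrt h1
    have e2 : |p.2| ≤ Real.sqrt c := by
      rw [← Real.sqrt_sq_eq_abs]; exact Real.sqrt_le_sqrt h2
    simp only [Metric.mem_closedBall, Prod.dist_eq, dist_zero_right, Real.norm_eq_abs,
      Prod.fst_zero, Prod.snd_zero, dist_zero_right] at *
    exact max_le e1 e2
  have hDclosed : IsClosed D := isClosed_le (by fun_prop) continuous_const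
  have hDcomp : IsCompact D :=
    (isCompact_closedBall (0 : ℝ × ℝ) (Real.sqrt c)).of_isClosed_subset hDclosed hDsub
  have hΦcont : Continuous Φ := by fun_prop
  have hEq : eulerK ρ pρ Pρ Q = Φ '' D := by
    ext z
    constructor
    · rintro ⟨h1, h2, h3, h4, h5, h6⟩
      refine ⟨(z.1, z.2.1), ?_, ?_⟩
      · show z.1 ^ 2 + z.2.1 ^ 2 ≤ c
        have hq : z.2.2.2.2.1 = (z.1 ^ 2 + z.2.1 ^ 2) / (2 * ρ) + pρ := by
          field_simp at h1 h2 ⊢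
          linarith
        rw [hq] at h6
        have : (z.1 ^ 2 + z.2.1 ^ 2) / (2 * ρ) ≤ Q - pρ := by linarith
        calc z.1 ^ 2 + z.2.1 ^ 2 = (z.1 ^ 2 + z.2.1 ^ 2) / (2 * ρ) * (2 * ρ) := by
              field_simp
          _ ≤ (Q - pρ) * (2 * ρ) := by
              apply mul_le_mul_of_nonneg_right this; positivity
          _ = c := by ring
      · have hq : z.2.2.2.2.1 = (z.1 ^ 2 + z.2.1 ^ 2) / (2 * ρ) + pρ := by
          field_simp at h1 h2 ⊢
          linarith
        have hU : z.2.2.1 = (z.1 ^ 2 - z.2.1 ^ 2) / (2 * ρ) := by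
          field_simp at h1 h2 ⊢
          linarith
        simp only [hΦ]
        ext <;> simp [← hq, ← hU, h3, h4, h5]
    · rintro ⟨p, hp, rfl⟩
      have hpc : p.1 ^ 2 + p.2 ^ 2 ≤ c := hp
      refine ⟨?_, ?_, rfl, rfl, rfl, ?_⟩
      · show (p.1 ^ 2 - p.2 ^ 2) / (2 * ρ) + ((p.1 ^ 2 + p.2 ^ 2) / (2 * ρ) + pρ)
            = p.1 ^ 2 / ρ + pρ
        field_simp
        ring
      · show -((p.1 ^ 2 - p.2 ^ 2) / (2 * ρ)) + ((p.1 ^ 2 + p.2 ^ 2) / (2 * ρ) + pρ)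
            = p.2 ^ 2 / ρ + pρ
        field_simp
        ring
      · show (p.1 ^ 2 + p.2 ^ 2) / (2 * ρ) + pρ ≤ Q
        have h2ρ : (0 : ℝ) < 2 * ρ := by positivity
        have : (p.1 ^ 2 + p.2 ^ 2) / (2 * ρ) ≤ Q - pρ := by
          rw [div_le_iff₀ h2ρ]; nlinarith [hpc]
        linarith
  rw [hEq]
  exact hDcomp.image hΦcont
end

section
/- Let ρ > 0, p(ρ) ∈ ℝ, Q ∈ ℝ. If (m, U, q, F) lies in the interior of the convex hull of K_{ρ,Q}, then λ_max((m⊗m)/ρ − U + (p(ρ) − q)I) < 0. Consequently, the interior of the convex hull of K_{ρ,Q} is disjoint from K_{ρ,Q}. -/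
open Matrix

/-- The largest eigenvalue of a symmetric real 2×2 matrix, given by the
explicit formula `(tr M + √(tr M ² − 4 det M)) / 2`. -/
noncomputable def lamMax (M : Matrix (Fin 2) (Fin 2) ℝ) : ℝ :=
  (Matrix.trace M + Real.sqrt ((Matrix.trace M) ^ 2 - 4 * M.det)) / 2

/-- The matrix `(m ⊗ m)/ρ − U + (p(ρ) − q)·I`. -/
noncomputable def eulerMat (ρ m₁ m₂ U₁₁ U₁₂ p q : ℝ) : Matrix (Fin 2) (Fin 2) ℝ :=
  !![m₁ * m₁ / ρ - U₁₁ + (p - q), m₁ * m₂ / ρ - U₁₂;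
     m₁ * m₂ / ρ - U₁₂, m₂ * m₂ / ρ + U₁₁ + (p - q)]

/-- If the quadratic form of a symmetric 2×2 matrix is `≤ -δ·|·|²` then its
largest eigenvalue is negative. -/
lemma lamMax_neg_aux (a b c δ : ℝ) (hδ : 0 < δ)
    (h : ∀ x y : ℝ, x^2*a + 2*x*y*b + y^2*c ≤ -(δ*(x^2+y^2))) :
    lamMax !![a, b; b, c] < 0 := by
  have h1 := h 1 0
  have h2 := h 0 1
  norm_num at h1 h2
  have h3 := h (-b) (a + δ/2)
  have ha : a ≤ -δ := by linarith
  have hc : c ≤ -δ := by linarith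
  have hsq : (0:ℝ) ≤ a^2 - (a+δ/2)^2 := by nlinarith
  have hkey : (-a)*(b*b) ≤ (-c-δ)*(a+δ/2)^2 := by nlinarith [h3]
  have hstep : (-c-δ)*(a+δ/2)^2 ≤ (-c-δ)*a^2 :=
    by nlinarith [mul_nonneg (by linarith : (0:ℝ) ≤ -c - δ) hsq]
  have ha2 : δ^2 ≤ a^2 := by nlinarith
  have hdet : 0 < a*c - b*b := by nlinarith [mul_pos hδ (by nlinarith : (0:ℝ) < a^2)]
  have htr : a + c < 0 := by linarith
  unfold lamMax
  rw [Matrix.trace_fin_two_of, Matrix.det_fin_two_of]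
  have hs : Real.sqrt ((a+c)^2 - 4*(a*c - b*b)) < -(a+c) := by
    rw [Real.sqrt_lt' (by linarith)]
    nlinarith
  linarith

/-- The (ρ-scaled) quadratic form of `eulerMat` is nonpositive on the convex
hull of `eulerK`. -/
lemma hull_quad (ρ pρ Pρ Q : ℝ) (hρ : 0 < ρ) (x y : ℝ) :
    ∀ z ∈ convexHull ℝ (eulerK ρ pρ Pρ Q),
      (x*z.1 + y*z.2.1)^2 + ρ*(-(x^2 - y^2)*z.2.2.1 - 2*x*y*z.2.2.2.1
        + (x^2+y^2)*(pρ - z.2.2.2.2.1)) ≤ 0 := by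
  have hρ0 : ρ ≠ 0 := hρ.ne'
  have hmin : convexHull ℝ (eulerK ρ pρ Pρ Q) ⊆
      {z : ℝ × ℝ × ℝ × ℝ × ℝ × ℝ × ℝ |
        (x*z.1 + y*z.2.1)^2 + ρ*(-(x^2 - y^2)*z.2.2.1 - 2*x*y*z.2.2.2.1
          + (x^2+y^2)*(pρ - z.2.2.2.2.1)) ≤ 0} := by
    apply convexHull_min
    · rintro z ⟨h1, h2, h3, -, -, -⟩
      simp only [Set.mem_setOf_eq]
      have H1 : ρ * (z.2.2.1 + z.2.2.2.2.1) = z.1^2 + ρ*pρ := by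
        field_simp at h1; linarith
      have H2 : ρ * (z.2.2.2.2.1 - z.2.2.1) = z.2.1^2 + ρ*pρ := by
        field_simp at h2; linarith
      have H3 : ρ * z.2.2.2.1 = z.1 * z.2.1 := by
        field_simp at h3; linarith
      have : (x*z.1 + y*z.2.1)^2 + ρ*(-(x^2 - y^2)*z.2.2.1 - 2*x*y*z.2.2.2.1
          + (x^2+y^2)*(pρ - z.2.2.2.2.1)) = 0 := by
        linear_combination (-(x^2))*H1 - y^2*H2 - 2*x*y*H3
      linarith
    · intro z hz w hw a b ha hb hab
      simp only [Set.mem_setOf_eq] at hz hw ⊢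
      simp only [Prod.fst_add, Prod.snd_add, Prod.smul_fst, Prod.smul_snd, smul_eq_mul]
      obtain rfl : b = 1 - a := by linarith
      nlinarith [hz, hw, ha, hb, hρ.le,
        mul_nonneg (mul_nonneg ha hb) (sq_nonneg ((x*z.1 + y*z.2.1) - (x*w.1 + y*w.2.1))),
        mul_nonneg ha (neg_nonneg.mpr hz), mul_nonneg hb (neg_nonneg.mpr hw)]
  intro z hz
  exact hmin hz

theorem interior_convexHull_eulerK
    (ρ pρ Pρ Q : ℝ) (hρ : 0 < ρ) :
    (∀ z ∈ interior (convexHull ℝ (eulerK ρ pρ Pρ Q)),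
      lamMax (eulerMat ρ z.1 z.2.1 z.2.2.1 z.2.2.2.1 pρ z.2.2.2.2.1) < 0) ∧
    interior (convexHull ℝ (eulerK ρ pρ Pρ Q)) ∩ eulerK ρ pρ Pρ Q = ∅ := by
  have hρ0 : ρ ≠ 0 := hρ.ne'
  have main : ∀ z ∈ interior (convexHull ℝ (eulerK ρ pρ Pρ Q)),
      lamMax (eulerMat ρ z.1 z.2.1 z.2.2.1 z.2.2.2.1 pρ z.2.2.2.2.1) < 0 := by
    rintro ⟨m₁, m₂, U₁₁, U₁₂, q, F₁, F₂⟩ hz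
    rw [mem_interior_iff_mem_nhds, Metric.mem_nhds_iff] at hz
    obtain ⟨ε, hε, hball⟩ := hz
    have hz' : ((m₁, m₂, U₁₁, U₁₂, q - ε/2, F₁, F₂) : ℝ×ℝ×ℝ×ℝ×ℝ×ℝ×ℝ)
        ∈ convexHull ℝ (eulerK ρ pρ Pρ Q) := by
      apply hball
      simp only [Metric.mem_ball, Prod.dist_eq, Real.dist_eq]
      simp only [sub_self, abs_zero, sub_sub_cancel_left, abs_neg]
      rw [abs_of_nonneg (by linarith : (0:ℝ) ≤ ε/2)]
      simp only [max_eq_right, le_refl, max_self]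
      simp [le_max_iff, max_lt_iff]
      linarith
    have key : ∀ x y : ℝ,
        x^2*(m₁ * m₁ / ρ - U₁₁ + (pρ - q)) + 2*x*y*(m₁ * m₂ / ρ - U₁₂)
          + y^2*(m₂ * m₂ / ρ + U₁₁ + (pρ - q)) ≤ -((ε/2)*(x^2+y^2)) := by
      intro x y
      have h := hull_quad ρ pρ Pρ Q hρ x y _ hz'
      simp only at h
      have heq : ρ * (x^2*(m₁ * m₁ / ρ - U₁₁ + (pρ - q)) + 2*x*y*(m₁ * m₂ / ρ - U₁₂)
          + y^2*(m₂ * m₂ / ρ + U₁₁ + (pρ - q)) + (ε/2)*(x^2+y^2))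
          = (x*m₁ + y*m₂)^2 + ρ*(-(x^2 - y^2)*U₁₁ - 2*x*y*U₁₂
            + (x^2+y^2)*(pρ - (q - ε/2))) := by
        field_simp
        ring
      have hle : ρ * (x^2*(m₁ * m₁ / ρ - U₁₁ + (pρ - q)) + 2*x*y*(m₁ * m₂ / ρ - U₁₂)
          + y^2*(m₂ * m₂ / ρ + U₁₁ + (pρ - q)) + (ε/2)*(x^2+y^2)) ≤ 0 := by
        rw [heq]; exact h
      by_contra hc
      push_neg at hc
      nlinarith [mul_pos hρ (by linarith : (0:ℝ) <
        x^2*(m₁ * m₁ / ρ - U₁₁ + (pρ - q)) + 2*x*y*(m₁ * m₂ / ρ - U₁₂)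
          + y^2*(m₂ * m₂ / ρ + U₁₁ + (pρ - q)) + (ε/2)*(x^2+y^2))]
    have := lamMax_neg_aux (m₁ * m₁ / ρ - U₁₁ + (pρ - q)) (m₁ * m₂ / ρ - U₁₂)
      (m₂ * m₂ / ρ + U₁₁ + (pρ - q)) (ε/2) (by linarith) key
    simpa [eulerMat] using this
  refine ⟨main, ?_⟩
  rw [Set.eq_empty_iff_forall_notMem]
  rintro z ⟨hzi, hzK⟩
  have hlt := main z hzi
  obtain ⟨h1, h2, h3, -, -, -⟩ := hzK
  have ha : z.1 * z.1 / ρ - z.2.2.1 + (pρ - z.2.2.2.2.1) = 0 := by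
    have : z.1 * z.1 / ρ = z.1 ^ 2 / ρ := by ring
    rw [this]; linarith
  have hb : z.1 * z.2.1 / ρ - z.2.2.2.1 = 0 := by rw [h3]; ring
  have hcc : z.2.1 * z.2.1 / ρ + z.2.2.1 + (pρ - z.2.2.2.2.1) = 0 := by
    have : z.2.1 * z.2.1 / ρ = z.2.1 ^ 2 / ρ := by ring
    rw [this]; linarith
  rw [eulerMat, ha, hb, hcc] at hlt
  rw [lamMax, Matrix.trace_fin_two_of, Matrix.det_fin_two_of] at hlt
  norm_num at hlt
end
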